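/- arXiv:2411.13475 — 5 statements merged into one kernel-verified Lean document; each statement's English description precedes it below -/
import Mathlib

section
/- Let N, M be natural numbers and let S_TT ∈ ℂ^{N×N}, S_TR ∈ ℂ^{N×M}, S_RT ∈ ℂ^{M×N}, S_RR ∈ ℂ^{M×M}, S_RRR ∈ ℂ^{M×M}, S_RF ∈ ℂ^{N×N} be complex matrices, and u ∈ ℂ^N. Suppose a_T, b_T ∈ ℂ^N and a_R, b_R ∈ ℂ^M satisfy the signal-flow equations a_T = S_RF·b_T + u, b_T = S_TT·a_T + S_TR·b_R, a_R = S_RT·a_T + S_RR·b_R, and b_R = S_RRR·a_R. Define L1 = S_RF·S_TT, L2 = S_RR·S_RRR, and (assuming I − L2 is invertible) L3 = S_RF·S_TR·S_RRR·(I − L2)⁻¹·S_RT. If moreover I − L1 − L3 is invertible, then a_R = (I − L2)⁻¹·S_RT·(I − L1 − L3)⁻¹·u. -/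
open Matrix

/-- Solving the REMS signal-flow equations for the radiating-structure-side
power wave vector `a_R` in terms of the source excitation `u`. -/
theorem signal_flow_aR
    (N M : ℕ)
    (S_TT S_RF : Matrix (Fin N) (Fin N) ℂ)
    (S_TR : Matrix (Fin N) (Fin M) ℂ)
    (S_RT : Matrix (Fin M) (Fin N) ℂ)
    (S_RR S_RRR : Matrix (Fin M) (Fin M) ℂ)
    (u aT bT : Fin N → ℂ) (aR bR : Fin M → ℂ)
    (h1 : aT = S_RF.mulVec bT + u)
    (h2 : bT = S_TT.mulVec aT + S_TR.mulVec bR)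
    (h3 : aR = S_RT.mulVec aT + S_RR.mulVec bR)
    (h4 : bR = S_RRR.mulVec aR)
    (hL2 : IsUnit (1 - S_RR * S_RRR))
    (hL : IsUnit (1 - S_RF * S_TT
          - S_RF * S_TR * S_RRR * (1 - S_RR * S_RRR)⁻¹ * S_RT)) :
    aR = ((1 - S_RR * S_RRR)⁻¹ * S_RT
          * (1 - S_RF * S_TT
              - S_RF * S_TR * S_RRR * (1 - S_RR * S_RRR)⁻¹ * S_RT)⁻¹).mulVec u := by
  set L2 := S_RR * S_RRR with hL2def
  set L := 1 - S_RF * S_TT - S_RF * S_TR * S_RRR * (1 - L2)⁻¹ * S_RT with hLdef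
  have hL2inv : (1 - L2)⁻¹ * (1 - L2) = 1 :=
    nonsing_inv_mul _ ((isUnit_iff_isUnit_det _).mp hL2)
  have hLinv : L⁻¹ * L = 1 :=
    nonsing_inv_mul _ ((isUnit_iff_isUnit_det _).mp hL)
  -- (1 - L2) * aR = S_RT * aT
  have e1 : (1 - L2).mulVec aR = S_RT.mulVec aT := by
    have key : aR = S_RT.mulVec aT + (S_RR * S_RRR).mulVec aR := by
      conv_lhs => rw [h3, h4]
      rw [mulVec_mulVec]
    rw [sub_mulVec, one_mulVec, hL2def]
    linear_combination (norm := module) key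
  have e2 : aR = ((1 - L2)⁻¹ * S_RT).mulVec aT := by
    calc aR = (1 : Matrix (Fin M) (Fin M) ℂ).mulVec aR := by rw [one_mulVec]
    _ = ((1 - L2)⁻¹ * (1 - L2)).mulVec aR := by rw [hL2inv]
    _ = (1 - L2)⁻¹.mulVec ((1 - L2).mulVec aR) := by rw [← mulVec_mulVec]
    _ = ((1 - L2)⁻¹ * S_RT).mulVec aT := by rw [e1, mulVec_mulVec]
  -- L * aT = u
  have e3 : L.mulVec aT = u := by
    have haT : aT = (S_RF * S_TT).mulVec aT
        + (S_RF * S_TR * S_RRR * (1 - L2)⁻¹ * S_RT).mulVec aT + u := by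
      conv_lhs => rw [h1, h2, h4, e2]
      simp only [mulVec_add, mulVec_mulVec, Matrix.mul_assoc]
    rw [hLdef, sub_mulVec, sub_mulVec, one_mulVec]
    linear_combination (norm := module) haT
  have e4 : aT = L⁻¹.mulVec u := by
    calc aT = (L⁻¹ * L).mulVec aT := by rw [hLinv, one_mulVec]
    _ = L⁻¹.mulVec (L.mulVec aT) := by rw [← mulVec_mulVec]
    _ = L⁻¹.mulVec u := by rw [e3]
  rw [e2, e4, mulVec_mulVec, Matrix.mul_assoc]
end

section
/- Let N, M be natural numbers and let S_TT ∈ ℂ^{N×N}, S_TR ∈ ℂ^{N×M}, S_RT ∈ ℂ^{M×N}, S_RR ∈ ℂ^{M×M}, S_RRR ∈ ℂ^{M×M}, S_RF ∈ ℂ^{N×N} be complex matrices, and u ∈ ℂ^N. Suppose a_T, b_T ∈ ℂ^N and a_R, b_R ∈ ℂ^M satisfy the signal-flow equations a_T = S_RF·b_T + u, b_T = S_TT·a_T + S_TR·b_R, a_R = S_RT·a_T + S_RR·b_R, and b_R = S_RRR·a_R. Define L1 = S_RF·S_TT, L2 = S_RR·S_RRR, and (assuming I − L2 is invertible) L3 =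 S_RF·S_TR·S_RRR·(I − L2)⁻¹·S_RT. If moreover I − L1 − L3 is invertible, then b_T − a_T = (S_TR·S_RRR·(I − L2)⁻¹·S_RT + S_TT − I)·(I − L1 − L3)⁻¹·u. -/
open Matrix

/-- Solving the REMS signal-flow equations for the difference `b_T − a_T`
in terms of the source excitation `u`. -/
theorem signal_flow_bT_sub_aT
    (N M : ℕ)
    (S_TT S_RF : Matrix (Fin N) (Fin N) ℂ)
    (S_TR : Matrix (Fin N) (Fin M) ℂ)
    (S_RT : Matrix (Fin M) (Fin N) ℂ)
    (S_RR S_RRR : Matrix (Fin M) (Fin M) ℂ)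
    (u aT bT : Fin N → ℂ) (aR bR : Fin M → ℂ)
    (h1 : aT = S_RF.mulVec bT + u)
    (h2 : bT = S_TT.mulVec aT + S_TR.mulVec bR)
    (h3 : aR = S_RT.mulVec aT + S_RR.mulVec bR)
    (h4 : bR = S_RRR.mulVec aR)
    (hL2 : IsUnit (1 - S_RR * S_RRR))
    (hL : IsUnit (1 - S_RF * S_TT
          - S_RF * S_TR * S_RRR * (1 - S_RR * S_RRR)⁻¹ * S_RT)) :
    bT - aT = ((S_TR * S_RRR * (1 - S_RR * S_RRR)⁻¹ * S_RT + S_TT - 1)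
          * (1 - S_RF * S_TT
              - S_RF * S_TR * S_RRR * (1 - S_RR * S_RRR)⁻¹ * S_RT)⁻¹).mulVec u := by
  set A : Matrix (Fin M) (Fin M) ℂ := 1 - S_RR * S_RRR with hA
  set K : Matrix (Fin N) (Fin N) ℂ := S_TT + S_TR * S_RRR * A⁻¹ * S_RT with hK
  set D : Matrix (Fin N) (Fin N) ℂ :=
    1 - S_RF * S_TT - S_RF * S_TR * S_RRR * A⁻¹ * S_RT with hD
  have hAdet : IsUnit A.det := (Matrix.isUnit_iff_isUnit_det A).mp hL2
  have hDdet : IsUnit D.det := (Matrix.isUnit_iff_isUnit_det D).mp hL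
  -- solve for aR
  have haR : A.mulVec aR = S_RT.mulVec aT := by
    rw [hA, Matrix.sub_mulVec, Matrix.one_mulVec, ← Matrix.mulVec_mulVec, ← h4, h3]
    abel
  have haR2 : aR = (A⁻¹ * S_RT).mulVec aT := by
    have := congrArg (A⁻¹.mulVec ·) haR
    simpa [Matrix.mulVec_mulVec, ← Matrix.mul_assoc,
      Matrix.nonsing_inv_mul A hAdet] using this
  -- bT in terms of aT
  have hbT : bT = K.mulVec aT := by
    rw [h2, h4, haR2, hK, Matrix.add_mulVec, Matrix.mulVec_mulVec,
      Matrix.mulVec_mulVec]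
    simp [Matrix.mul_assoc]
  -- aT in terms of u
  have hDK : D = 1 - S_RF * K := by
    rw [hD, hK, Matrix.mul_add, sub_add_eq_sub_sub, ← Matrix.mul_assoc,
      ← Matrix.mul_assoc, ← Matrix.mul_assoc]
  have haT : D.mulVec aT = u := by
    rw [hDK, Matrix.sub_mulVec, Matrix.one_mulVec]
    have h5 : aT = (S_RF * K).mulVec aT + u := by
      rw [← Matrix.mulVec_mulVec, ← hbT]; exact h1
    nth_rewrite 1 [h5]
    abel
  have haT2 : aT = D⁻¹.mulVec u := by
    have := congrArg (D⁻¹.mulVec ·) haT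
    simpa [Matrix.mulVec_mulVec, Matrix.nonsing_inv_mul D hDdet] using this
  have key : S_TR * S_RRR * A⁻¹ * S_RT + S_TT - 1 = K - 1 := by
    rw [hK]; abel
  rw [key, hbT, haT2, Matrix.mulVec_mulVec,
    Matrix.sub_mul, Matrix.one_mul, Matrix.sub_mulVec]
end

section
/- Let N, M be natural numbers and let S_TT ∈ ℂ^{N×N}, S_TR ∈ ℂ^{N×M}, S_RT ∈ ℂ^{M×N}, S_RR ∈ ℂ^{M×M}, S_RRR ∈ ℂ^{M×M}, S_RF ∈ ℂ^{N×N} be complex matrices, and r ∈ ℂ^M. Suppose a_T, b_T ∈ ℂ^N and a_R, b_R ∈ ℂ^M satisfy the signal-flow equations a_T = S_RF·b_T, b_T = S_TT·a_T + S_TR·b_R, a_R = S_RT·a_T + S_RR·b_R, and b_R = S_RRR·a_R + r. Define L5 = S_TT·S_RF, L6 = S_RRR·S_RR, and (assuming I − L5 is invertible) L7 = S_RRR·S_RT·S_RF·(I − L5)⁻¹·S_TR. If moreover I − L6 − L7 is invertible, then a_R = (S_RT·S_RF·(I − L5)⁻¹·S_TR + S_RR)·(I − L6 − L7)⁻¹·r.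 -/
open Matrix

lemma solve_mulVec {n : ℕ} (B : Matrix (Fin n) (Fin n) ℂ) (x y : Fin n → ℂ)
    (hB : IsUnit B) (h : B.mulVec x = y) : x = B⁻¹.mulVec y := by
  have := congrArg (B⁻¹.mulVec) h
  rwa [Matrix.mulVec_mulVec, Matrix.nonsing_inv_mul B ((Matrix.isUnit_iff_isUnit_det B).mp hB),
    Matrix.one_mulVec] at this

/-- REMS excited only by an incoming far-field wave: solving the signal-flow
equations for `a_R` in terms of the far-field excitation `r`. -/
theorem signal_flow_farfield_aR
    (N M : ℕ)
    (S_TT S_RF : Matrix (Fin N) (Fin N) ℂ)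
    (S_TR : Matrix (Fin N) (Fin M) ℂ)
    (S_RT : Matrix (Fin M) (Fin N) ℂ)
    (S_RR S_RRR : Matrix (Fin M) (Fin M) ℂ)
    (r : Fin M → ℂ) (aT bT : Fin N → ℂ) (aR bR : Fin M → ℂ)
    (h1 : aT = S_RF.mulVec bT)
    (h2 : bT = S_TT.mulVec aT + S_TR.mulVec bR)
    (h3 : aR = S_RT.mulVec aT + S_RR.mulVec bR)
    (h4 : bR = S_RRR.mulVec aR + r)
    (hL5 : IsUnit (1 - S_TT * S_RF))
    (hL : IsUnit (1 - S_RRR * S_RR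
          - S_RRR * S_RT * S_RF * (1 - S_TT * S_RF)⁻¹ * S_TR)) :
    aR = ((S_RT * S_RF * (1 - S_TT * S_RF)⁻¹ * S_TR + S_RR)
          * (1 - S_RRR * S_RR
              - S_RRR * S_RT * S_RF * (1 - S_TT * S_RF)⁻¹ * S_TR)⁻¹).mulVec r := by
  -- Solve for bT
  have hbT : bT = ((1 - S_TT * S_RF)⁻¹ * S_TR).mulVec bR := by
    have heq : (1 - S_TT * S_RF).mulVec bT = S_TR.mulVec bR := by
      rw [Matrix.sub_mulVec, Matrix.one_mulVec, ← Matrix.mulVec_mulVec, ← h1]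
      rw [h2]; abel
    have := solve_mulVec _ _ _ hL5 heq
    rw [this, Matrix.mulVec_mulVec]
  -- aR in terms of bR
  have haR : aR = (S_RT * S_RF * (1 - S_TT * S_RF)⁻¹ * S_TR + S_RR).mulVec bR := by
    rw [h3, h1, hbT]
    simp only [Matrix.mulVec_mulVec, Matrix.add_mulVec, Matrix.mul_assoc]
  -- solve for bR
  have hbR : bR = (1 - S_RRR * S_RR
      - S_RRR * S_RT * S_RF * (1 - S_TT * S_RF)⁻¹ * S_TR)⁻¹.mulVec r := by
    apply solve_mulVec _ _ _ hL
    have : (1 - S_RRR * S_RR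
        - S_RRR * S_RT * S_RF * (1 - S_TT * S_RF)⁻¹ * S_TR)
        = 1 - S_RRR * (S_RT * S_RF * (1 - S_TT * S_RF)⁻¹ * S_TR + S_RR) := by
      rw [Matrix.mul_add, ← Matrix.mul_assoc, ← Matrix.mul_assoc, ← Matrix.mul_assoc]
      abel
    rw [this, Matrix.sub_mulVec, Matrix.one_mulVec, ← Matrix.mulVec_mulVec, ← haR, h4]
    abel
  rw [haR, hbR, Matrix.mulVec_mulVec]
end

section
/- Let N, M be natural numbers and let S_TT ∈ ℂ^{N×N}, S_TR ∈ ℂ^{N×M}, S_RT ∈ ℂ^{M×N}, S_RR ∈ ℂ^{M×M}, S_RRR ∈ ℂ^{M×M}, S_RF ∈ ℂ^{N×N} be complex matrices, and r ∈ ℂ^M. Suppose a_T, b_T ∈ ℂ^N and a_R, b_R ∈ ℂ^M satisfy the signal-flow equations a_T = S_RF·b_T, b_T = S_TT·a_T + S_TR·b_R, a_R = S_RT·a_T + S_RR·b_R, and b_R = S_RRR·a_R + r. Define L5 = S_TT·S_RF, L6 = S_RRR·S_RR, and (assuming I − L5 is invertible) L7 = S_RRR·S_RT·S_RF·(I − L5)⁻¹·S_TR.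 If moreover I − L6 − L7 is invertible, then b_T − a_T = (I − S_RF)·(I − L5)⁻¹·S_TR·(I − L6 − L7)⁻¹·r. -/
open Matrix

/-- REMS excited only by an incoming far-field wave: solving the signal-flow
equations for `b_T − a_T` in terms of the far-field excitation `r`. -/
theorem signal_flow_farfield_bT_sub_aT
    (N M : ℕ)
    (S_TT S_RF : Matrix (Fin N) (Fin N) ℂ)
    (S_TR : Matrix (Fin N) (Fin M) ℂ)
    (S_RT : Matrix (Fin M) (Fin N) ℂ)
    (S_RR S_RRR : Matrix (Fin M) (Fin M) ℂ)
    (r : Fin M → ℂ) (aT bT : Fin N → ℂ) (aR bR : Fin M → ℂ)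
    (h1 : aT = S_RF.mulVec bT)
    (h2 : bT = S_TT.mulVec aT + S_TR.mulVec bR)
    (h3 : aR = S_RT.mulVec aT + S_RR.mulVec bR)
    (h4 : bR = S_RRR.mulVec aR + r)
    (hL5 : IsUnit (1 - S_TT * S_RF))
    (hL : IsUnit (1 - S_RRR * S_RR
          - S_RRR * S_RT * S_RF * (1 - S_TT * S_RF)⁻¹ * S_TR)) :
    bT - aT = ((1 - S_RF) * (1 - S_TT * S_RF)⁻¹ * S_TR
          * (1 - S_RRR * S_RR
              - S_RRR * S_RT * S_RF * (1 - S_TT * S_RF)⁻¹ * S_TR)⁻¹).mulVec r := by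
  have hdL5 : IsUnit (1 - S_TT * S_RF).det := (isUnit_iff_isUnit_det _).mp hL5
  have hdL : IsUnit (1 - S_RRR * S_RR
      - S_RRR * S_RT * S_RF * (1 - S_TT * S_RF)⁻¹ * S_TR).det :=
    (isUnit_iff_isUnit_det _).mp hL
  -- (1 - S_TT S_RF) bT = S_TR bR
  have hbT0 : (1 - S_TT * S_RF).mulVec bT = S_TR.mulVec bR := by
    rw [sub_mulVec, one_mulVec, ← mulVec_mulVec, ← h1]
    rw [h2]; abel
  have hbT : bT = ((1 - S_TT * S_RF)⁻¹ * S_TR).mulVec bR := by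
    have := congrArg ((1 - S_TT * S_RF)⁻¹).mulVec hbT0
    rwa [mulVec_mulVec, mulVec_mulVec, nonsing_inv_mul _ hdL5, one_mulVec] at this
  -- (1 - L6 - L7) bR = r
  have hbR0 : (1 - S_RRR * S_RR
      - S_RRR * S_RT * S_RF * (1 - S_TT * S_RF)⁻¹ * S_TR).mulVec bR = r := by
    have h4' : bR = (S_RRR * S_RT * S_RF * (1 - S_TT * S_RF)⁻¹ * S_TR).mulVec bR
        + (S_RRR * S_RR).mulVec bR + r := by
      calc bR = S_RRR.mulVec aR + r := h4
        _ = S_RRR.mulVec (S_RT.mulVec aT) + S_RRR.mulVec (S_RR.mulVec bR) + r := by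
            rw [h3, mulVec_add]
        _ = _ := by
            rw [h1, hbT]
            simp only [mulVec_mulVec, Matrix.mul_assoc]
    rw [sub_mulVec, sub_mulVec, one_mulVec]
    nth_rewrite 1 [h4']
    abel
  have hbR : bR = (1 - S_RRR * S_RR
      - S_RRR * S_RT * S_RF * (1 - S_TT * S_RF)⁻¹ * S_TR)⁻¹.mulVec r := by
    have := congrArg ((1 - S_RRR * S_RR
      - S_RRR * S_RT * S_RF * (1 - S_TT * S_RF)⁻¹ * S_TR)⁻¹).mulVec hbR0
    rwa [mulVec_mulVec, nonsing_inv_mul _ hdL, one_mulVec] at this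
  calc bT - aT = (1 - S_RF).mulVec bT := by
        rw [h1, sub_mulVec, one_mulVec]
    _ = _ := by
        rw [hbT, hbR]
        simp only [mulVec_mulVec, Matrix.mul_assoc]
end

section
/- Let N, M be natural numbers and let S_TT ∈ ℂ^{N×N}, S_TR ∈ ℂ^{N×M}, S_RT ∈ ℂ^{M×N}, S_RR ∈ ℂ^{M×M}, S_RRR ∈ ℂ^{M×M}, S_RF ∈ ℂ^{N×N} be complex matrices. Define L1 = S_RF·S_TT, L2 = S_RR·S_RRR, and (assuming I − L2 is invertible) L3 = S_RF·S_TR·S_RRR·(I − L2)⁻¹·S_RT, and assume also that I − L1 − L3 is invertible. Then for every u ∈ ℂ^N there exists exactly one tuple (a_T, b_T, a_R, b_R) with a_T, b_T ∈ ℂ^N and a_R, b_R ∈ ℂ^M satisfying a_T = S_RF·b_T + u, b_T = S_TT·a_T + S_TR·b_R, a_R = S_RT·a_T + S_RR·b_R, and b_R = S_RRR·a_R. -/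
open Matrix

/-- Under the invertibility conditions, the REMS signal-flow equations have a
unique solution `(a_T, b_T, a_R, b_R)` for every source excitation `u`. -/
theorem signal_flow_existsUnique
    (N M : ℕ)
    (S_TT S_RF : Matrix (Fin N) (Fin N) ℂ)
    (S_TR : Matrix (Fin N) (Fin M) ℂ)
    (S_RT : Matrix (Fin M) (Fin N) ℂ)
    (S_RR S_RRR : Matrix (Fin M) (Fin M) ℂ)
    (hL2 : IsUnit (1 - S_RR * S_RRR))
    (hL : IsUnit (1 - S_RF * S_TT
          - S_RF * S_TR * S_RRR * (1 - S_RR * S_RRR)⁻¹ * S_RT)) :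
    ∀ u : Fin N → ℂ,
      ∃! x : (Fin N → ℂ) × (Fin N → ℂ) × (Fin M → ℂ) × (Fin M → ℂ),
        x.1 = S_RF.mulVec x.2.1 + u
        ∧ x.2.1 = S_TT.mulVec x.1 + S_TR.mulVec x.2.2.2
        ∧ x.2.2.1 = S_RT.mulVec x.1 + S_RR.mulVec x.2.2.2
        ∧ x.2.2.2 = S_RRR.mulVec x.2.2.1 := by
  intro u
  set L2 : Matrix (Fin M) (Fin M) ℂ := S_RR * S_RRR with hL2def
  set K : Matrix (Fin M) (Fin M) ℂ := (1 - L2)⁻¹ with hKdef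
  set A : Matrix (Fin N) (Fin N) ℂ :=
    1 - S_RF * S_TT - S_RF * S_TR * S_RRR * K * S_RT with hAdef
  have hdet2 : IsUnit (1 - L2).det := (Matrix.isUnit_iff_isUnit_det _).mp hL2
  have hdetA : IsUnit A.det := (Matrix.isUnit_iff_isUnit_det _).mp hL
  have hK1 : K * (1 - L2) = 1 := Matrix.nonsing_inv_mul _ hdet2
  have hK2 : (1 - L2) * K = 1 := Matrix.mul_nonsing_inv _ hdet2
  have hA1 : A⁻¹ * A = 1 := Matrix.nonsing_inv_mul _ hdetA
  have hA2 : A * A⁻¹ = 1 := Matrix.mul_nonsing_inv _ hdetA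
  -- the candidate solution
  set aT : Fin N → ℂ := A⁻¹.mulVec u with haTdef
  set aR : Fin M → ℂ := K.mulVec (S_RT.mulVec aT) with haRdef
  set bR : Fin M → ℂ := S_RRR.mulVec aR with hbRdef
  set bT : Fin N → ℂ := S_TT.mulVec aT + S_TR.mulVec bR with hbTdef
  have hAaT : A.mulVec aT = u := by
    rw [haTdef, Matrix.mulVec_mulVec, hA2, Matrix.one_mulVec]
  have hKaR : (1 - L2).mulVec aR = S_RT.mulVec aT := by
    rw [haRdef, Matrix.mulVec_mulVec, hK2, Matrix.one_mulVec]
  refine ⟨(aT, bT, aR, bR), ⟨?_, rfl, ?_, rfl⟩, ?_⟩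
  · -- aT = S_RF bT + u
    have h1 : S_RF.mulVec bT
        = (S_RF * S_TT + S_RF * S_TR * S_RRR * K * S_RT).mulVec aT := by
      rw [hbTdef, Matrix.mulVec_add, Matrix.add_mulVec, hbRdef, haRdef]
      simp [Matrix.mulVec_mulVec, Matrix.mul_assoc]
    have h2 : (S_RF * S_TT + S_RF * S_TR * S_RRR * K * S_RT) = 1 - A := by
      rw [hAdef, sub_sub, sub_sub_cancel]
    rw [h1, h2, Matrix.sub_mulVec, Matrix.one_mulVec, hAaT]
    abel
  · -- aR = S_RT aT + S_RR bR
    have : aR - L2.mulVec aR = S_RT.mulVec aT := by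
      rw [← hKaR, Matrix.sub_mulVec, Matrix.one_mulVec]
    have h3 : S_RR.mulVec bR = L2.mulVec aR := by
      rw [hbRdef, Matrix.mulVec_mulVec, hL2def]
    rw [h3, ← this]; abel
  · -- uniqueness
    rintro ⟨xT, yT, xR, yR⟩ ⟨h1, h2, h3, h4⟩
    simp only at h1 h2 h3 h4 ⊢
    -- solve for xR in terms of xT
    have hxR : xR = K.mulVec (S_RT.mulVec xT) := by
      have h5 : (1 - L2).mulVec xR = S_RT.mulVec xT := by
        have hLx : L2.mulVec xR = S_RR.mulVec yR := by
          rw [hL2def, ← Matrix.mulVec_mulVec, ← h4]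
        rw [Matrix.sub_mulVec, Matrix.one_mulVec, hLx, h3]; abel
      calc xR = (K * (1 - L2)).mulVec xR := by
                rw [hK1, Matrix.one_mulVec]
        _ = K.mulVec ((1 - L2).mulVec xR) := by rw [Matrix.mulVec_mulVec]
        _ = K.mulVec (S_RT.mulVec xT) := by rw [h5]
    have hyR : yR = (S_RRR * K * S_RT).mulVec xT := by
      rw [h4, hxR]; simp [Matrix.mulVec_mulVec, Matrix.mul_assoc]
    have hxT : xT = aT := by
      have hAx : A.mulVec xT = u := by
        have : S_RF.mulVec yT = ((S_RF * S_TT) + S_RF * S_TR * S_RRR * K * S_RT).mulVec xT := by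
          rw [h2, Matrix.mulVec_add, hyR]
          simp [Matrix.mulVec_mulVec, Matrix.add_mulVec, Matrix.mul_assoc]
        rw [hAdef, Matrix.sub_mulVec, Matrix.sub_mulVec, Matrix.one_mulVec]
        have hu : xT = ((S_RF * S_TT) + S_RF * S_TR * S_RRR * K * S_RT).mulVec xT + u := by
          rw [← this, ← h1]
        rw [Matrix.add_mulVec] at hu
        nth_rewrite 1 [hu]
        abel
      calc xT = (A⁻¹ * A).mulVec xT := by rw [hA1, Matrix.one_mulVec]
        _ = A⁻¹.mulVec (A.mulVec xT) := by rw [Matrix.mulVec_mulVec]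
        _ = aT := by rw [hAx, haTdef]
    have hxR' : xR = aR := by rw [hxR, hxT, haRdef]
    have hyR' : yR = bR := by
      rw [hyR, hxT, hbRdef, haRdef]
      simp [Matrix.mulVec_mulVec, Matrix.mul_assoc]
    have hyT : yT = bT := by rw [h2, hxT, hyR', hbTdef]
    exact Prod.ext hxT (Prod.ext hyT (Prod.ext hxR' hyR'))
end
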